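/- (Contraction of base norm distance.) Let C ⊆ V and C' ⊆ V' be proper cones with bases B = C ∩ {v | ⟨e,v⟩ = 1} and B' = C' ∩ {v' | ⟨e',v'⟩ = 1}, and let T : V → V' be a linear base-preserving map (T(B) ⊆ B'). Then for all v₁, v₂ ∈ V with ⟨e,v₁⟩ = ⟨e,v₂⟩: ‖T v₁ − T v₂‖_{B'} ≤ ‖v₁ − v₂‖_B · tanh(Δ(T)/4), where tanh(∞/4) := 1. -/

import Mathlib

noncomputable section

variable {V : Type*} [NormedAddCommGroup V] [InnerProductSpace ℝ V]

/-- A proper cone: closed, convex, closed under nonnegative scaling, pointed and solid. -/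
def IsProperCone (C : Set V) : Prop :=
  IsClosed C ∧ Convex ℝ C ∧ (∀ (r : ℝ), 0 ≤ r → ∀ x ∈ C, r • x ∈ C) ∧
    (C ∩ (-C) = {0}) ∧ (Submodule.span ℝ C = ⊤)

/-- `sup_C(a/b) := inf {λ : ℝ | λ • b - a ∈ C}`, as an extended real (`⊤` if no such `λ`). -/
def supRatio (C : Set V) (a b : V) : EReal :=
  sInf ((fun l : ℝ => (l : EReal)) '' {l : ℝ | l • b - a ∈ C})

/-- `inf_C(a/b) := sup {λ : ℝ | a - λ • b ∈ C}`. -/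
def infRatio (C : Set V) (a b : V) : EReal :=
  sSup ((fun l : ℝ => (l : EReal)) '' {l : ℝ | a - l • b ∈ C})

/-- Hilbert's projective metric `h_C(a,b) = ln (sup_C(a/b) * sup_C(b/a)) ∈ [0,∞]`. -/
def hilbertDist (C : Set V) (a b : V) : EReal :=
  if supRatio C a b = ⊤ ∨ supRatio C b a = ⊤ then ⊤
  else ((Real.log ((supRatio C a b).toReal * (supRatio C b a).toReal) : ℝ) : EReal)

/-- The oscillation `osc_C(a/b) = sup_C(a/b) - inf_C(a/b)`. -/
def oscRatio (C : Set V) (a b : V) : EReal :=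
  supRatio C a b - infRatio C a b

variable {V' : Type*} [NormedAddCommGroup V'] [InnerProductSpace ℝ V']

/-- The projective diameter `Δ(T)` of a cone-preserving linear map `T`. -/
def projDiam (C : Set V) (C' : Set V') (T : V →ₗ[ℝ] V') : EReal :=
  ⨆ (a : V) (_ : a ∈ C \ {0}) (b : V) (_ : b ∈ C \ {0}), hilbertDist C' (T a) (T b)

/-- `tanh(x/4)`, with the convention `tanh(⊤/4) = 1`. -/
def tanhQuarter (x : EReal) : ℝ :=
  if x = ⊤ then 1 else Real.tanh (x.toReal / 4)

/-- `tanh(x/2)`, with the convention `tanh(⊤/2) = 1`. -/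
def tanhHalf (x : EReal) : ℝ :=
  if x = ⊤ then 1 else Real.tanh (x.toReal / 2)

/-- The dual cone of `C` (identifying `V` with its dual via the inner product). -/
def dualConeSet (C : Set V) : Set V := {w : V | ∀ c ∈ C, 0 ≤ (inner ℝ w c : ℝ)}

/-- The base norm `‖v‖_B` induced by the cone `C` and the functional `⟨e, ·⟩`. -/
def baseNorm (C : Set V) (e : V) (v : V) : ℝ :=
  sInf {r : ℝ | ∃ cp ∈ C, ∃ cm ∈ C, v = cp - cm ∧ r = (inner ℝ e cp : ℝ) + (inner ℝ e cm : ℝ)}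

/-- The negativity `N_B(v)` induced by the cone `C` and the functional `⟨e, ·⟩`. -/
def negativity (C : Set V) (e : V) (v : V) : ℝ :=
  sInf {r : ℝ | ∃ cp ∈ C, ∃ cm ∈ C, v = cp - cm ∧ r = (inner ℝ e cm : ℝ)}

/-!
Write `v₁ - v₂ = c₁ - c₂` with `c₁, c₂ ∈ C`. Since `⟪e, v₁ - v₂⟫ = 0` both parts have the same
mass `λ`, so `cᵢ = λ bᵢ` with `bᵢ ∈ B`, and the images `T bᵢ ∈ B'` are at Hilbert distance at
most `Δ(T)`. For `a, b ∈ B'` with finite ratios `M = sup(a/b)`, `M' = sup(b/a)` the vectors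
`M b - a` and `M' a - b` lie in `C'`, and `a - b` is a nonnegative combination of them of total
mass `2 (M - 1) (M' - 1) / (M M' - 1)`, which by AM-GM is at most `2 tanh (log (M M') / 4)`.
So `‖T c₁ - T c₂‖_{B'} ≤ 2 λ tanh (Δ(T) / 4)`; take the infimum over all decompositions.
-/
open Set Real Filter Topology
open scoped RealInnerProductSpace

variable {C : Set V} {e : V}

theorem IsProperCone.smul_mem (hC : IsProperCone C) {r : ℝ} (hr : 0 ≤ r) {x : V} (hx : x ∈ C) :
    r • x ∈ C :=
  hC.2.2.1 r hr x hx

theorem IsProperCone.zero_mem (hC : IsProperCone C) : (0 : V) ∈ C :=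
  (hC.2.2.2.1.ge (mem_singleton 0)).1

theorem IsProperCone.add_mem (hC : IsProperCone C) {x y : V} (hx : x ∈ C) (hy : y ∈ C) :
    x + y ∈ C := by
  have hmid := hC.2.1 hx hy (by norm_num : (0 : ℝ) ≤ 1 / 2) (by norm_num : (0 : ℝ) ≤ 1 / 2)
    (by norm_num)
  convert hC.smul_mem (by norm_num : (0 : ℝ) ≤ 2) hmid using 1
  module

theorem IsProperCone.eq_zero_of_neg_mem (hC : IsProperCone C) {x : V} (hx : x ∈ C)
    (hnx : -x ∈ C) : x = 0 :=
  hC.2.2.2.1.le ⟨hx, mem_neg.2 hnx⟩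

theorem IsProperCone.exists_sub_eq (hC : IsProperCone C) (v : V) :
    ∃ cp ∈ C, ∃ cm ∈ C, v = cp - cm := by
  have hv : v ∈ Submodule.span ℝ C := hC.2.2.2.2 ▸ Submodule.mem_top
  induction hv using Submodule.span_induction with
  | mem x hx => exact ⟨x, hx, 0, hC.zero_mem, (sub_zero x).symm⟩
  | zero => exact ⟨0, hC.zero_mem, 0, hC.zero_mem, (sub_zero 0).symm⟩
  | add x y _ _ hx hy =>
    obtain ⟨a, ha, b, hb, rfl⟩ := hx
    obtain ⟨c, hc, d, hd, rfl⟩ := hy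
    exact ⟨a + c, hC.add_mem ha hc, b + d, hC.add_mem hb hd, by abel⟩
  | smul r x _ hx =>
    obtain ⟨a, ha, b, hb, rfl⟩ := hx
    rcases le_total 0 r with hr | hr
    · exact ⟨r • a, hC.smul_mem hr ha, r • b, hC.smul_mem hr hb, smul_sub r a b⟩
    · exact ⟨(-r) • b, hC.smul_mem (neg_nonneg.2 hr) hb, (-r) • a,
        hC.smul_mem (neg_nonneg.2 hr) ha, by module⟩

theorem inner_pos_of_mem_interior_dualConeSet (he : e ∈ interior (dualConeSet C)) {c : V}
    (hc : c ∈ C) (hc0 : c ≠ 0) : 0 < ⟪e, c⟫ := by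
  have hline : Tendsto (fun t : ℝ => e - t • c) (𝓝[>] 0) (𝓝 e) := by
    have : Continuous fun t : ℝ => e - t • c := by fun_prop
    simpa using (this.tendsto 0).mono_left nhdsWithin_le_nhds
  obtain ⟨t, ht, ht0⟩ :=
    ((hline.eventually (mem_interior_iff_mem_nhds.1 he)).and self_mem_nhdsWithin).exists
  have hinner := ht c hc
  rw [inner_sub_left, real_inner_smul_left, real_inner_self_eq_norm_sq] at hinner
  have : 0 < t * ‖c‖ ^ 2 := mul_pos ht0 (by positivity)
  linarith

theorem baseNorm_le (he : e ∈ dualConeSet C) {v cp cm : V} (hcp : cp ∈ C) (hcm : cm ∈ C)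
    (hv : v = cp - cm) : baseNorm C e v ≤ ⟪e, cp⟫ + ⟪e, cm⟫ := by
  refine csInf_le ⟨0, ?_⟩ ⟨cp, hcp, cm, hcm, hv, rfl⟩
  rintro _ ⟨cp, hcp, cm, hcm, -, rfl⟩
  exact add_nonneg (he cp hcp) (he cm hcm)

theorem le_baseNorm_mul_of_forall (hC : IsProperCone C) (he : e ∈ dualConeSet C) {v : V}
    {x t : ℝ} (h : ∀ cp ∈ C, ∀ cm ∈ C, v = cp - cm → x ≤ (⟪e, cp⟫ + ⟪e, cm⟫) * t) :
    x ≤ baseNorm C e v * t := by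
  obtain ⟨cp, hcp, cm, hcm, hv⟩ := hC.exists_sub_eq v
  rcases le_or_gt t 0 with ht | ht
  · exact (h cp hcp cm hcm hv).trans
      (mul_le_mul_of_nonpos_right (baseNorm_le he hcp hcm hv) ht)
  · rw [← div_le_iff₀ ht, baseNorm]
    refine le_csInf ⟨_, cp, hcp, cm, hcm, hv, rfl⟩ ?_
    rintro _ ⟨cp, hcp, cm, hcm, hv, rfl⟩
    exact (div_le_iff₀ ht).2 (h cp hcp cm hcm hv)

theorem baseNorm_smul_le (hC : IsProperCone C) (he : e ∈ dualConeSet C) {r : ℝ} (hr : 0 ≤ r)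
    (v : V) : baseNorm C e (r • v) ≤ r * baseNorm C e v := by
  rw [mul_comm]
  refine le_baseNorm_mul_of_forall hC he fun cp hcp cm hcm hv => ?_
  calc baseNorm C e (r • v) ≤ ⟪e, r • cp⟫ + ⟪e, r • cm⟫ :=
        baseNorm_le he (hC.smul_mem hr hcp) (hC.smul_mem hr hcm) (by rw [hv, smul_sub])
    _ = (⟪e, cp⟫ + ⟪e, cm⟫) * r := by
        rw [real_inner_smul_right, real_inner_smul_right]; ring

theorem Real.tanh_monotone : Monotone tanh := fun x y h => by
  rwa [← artanh_le_artanh_iff ⟨neg_one_lt_tanh x, tanh_lt_one x⟩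
    ⟨neg_one_lt_tanh y, tanh_lt_one y⟩, artanh_tanh, artanh_tanh]

theorem Real.tanh_log_div_four {x : ℝ} (hx : 0 < x) :
    tanh (log x / 4) = (√x - 1) / (√x + 1) := by
  have hsq : exp (log x / 4) ^ 2 = √x := by
    rw [sq, ← exp_add, show log x / 4 + log x / 4 = log x / 2 by ring, exp_half, exp_log hx]
  rw [tanh_eq, exp_neg, ← hsq]
  field_simp

theorem Real.sub_one_mul_sub_one_div_le_tanh {M M' : ℝ} (hM : 1 ≤ M) (hM' : 1 ≤ M') :
    (M - 1) * (M' - 1) / (M * M' - 1) ≤ tanh (log (M * M') / 4) := by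
  rw [tanh_log_div_four (by positivity), sqrt_mul (by positivity)]
  have hamgm : 2 * (√M * √M') ≤ M + M' := by
    nlinarith [sq_nonneg (√M - √M'), sq_sqrt (zero_le_one.trans hM),
      sq_sqrt (zero_le_one.trans hM')]
  have hprod : √M * √M' * (√M * √M') = M * M' := by
    rw [mul_mul_mul_comm, mul_self_sqrt (zero_le_one.trans hM),
      mul_self_sqrt (zero_le_one.trans hM')]
  have hs : 1 ≤ √M * √M' := one_le_mul_of_one_le_of_one_le (one_le_sqrt.2 hM) (one_le_sqrt.2 hM')
  rcases hs.eq_or_lt with hs1 | hs1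
  · rw [← hs1, ← hprod, ← hs1]; simp
  · rw [div_le_div_iff₀ (by nlinarith) (by linarith)]
    nlinarith [mul_le_mul_of_nonneg_right hamgm (by linarith : (0 : ℝ) ≤ √M * √M' + 1)]

def coneBase (C : Set V) (e : V) : Set V := C ∩ {v | ⟪e, v⟫ = 1}

theorem ne_zero_of_mem_coneBase {b : V} (hb : b ∈ coneBase C e) : b ≠ 0 := by
  rintro rfl
  simpa using hb.2

theorem inv_inner_smul_mem_coneBase (hC : IsProperCone C) {c : V} (hc : c ∈ C)
    (hpos : 0 < ⟪e, c⟫) : ⟪e, c⟫⁻¹ • c ∈ coneBase C e :=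
  ⟨hC.smul_mem (inv_nonneg.2 hpos.le) hc,
    show ⟪e, ⟪e, c⟫⁻¹ • c⟫ = 1 by rw [real_inner_smul_right, inv_mul_cancel₀ hpos.ne']⟩

theorem one_le_of_smul_sub_mem (he : e ∈ dualConeSet C) {a b : V} (ha : ⟪e, a⟫ = 1)
    (hb : ⟪e, b⟫ = 1) {l : ℝ} (hl : l • b - a ∈ C) : 1 ≤ l := by
  have := he _ hl
  rw [inner_sub_right, real_inner_smul_right, ha, hb] at this
  linarith

theorem exists_supRatio_eq_coe (hC : IsClosed C) (he : e ∈ dualConeSet C) {a b : V}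
    (ha : ⟪e, a⟫ = 1) (hb : ⟪e, b⟫ = 1) (h : supRatio C a b ≠ ⊤) :
    ∃ M : ℝ, supRatio C a b = M ∧ M • b - a ∈ C := by
  set S := {l : ℝ | l • b - a ∈ C}
  have hne : S.Nonempty := by
    rw [nonempty_iff_ne_empty]
    rintro hS
    exact h (by simp [supRatio, S, hS])
  have hleast : IsLeast S (sInf S) := (hC.preimage (by fun_prop)).isLeast_csInf hne
    ⟨1, fun l hl => one_le_of_smul_sub_mem he ha hb hl⟩
  exact ⟨sInf S, (EReal.coe_strictMono.monotone.map_isLeast hleast).csInf_eq, hleast.1⟩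

theorem hilbertDist_ne_bot (C : Set V) (a b : V) : hilbertDist C a b ≠ ⊥ := by
  unfold hilbertDist
  split_ifs <;> simp

theorem hilbertDist_eq_log {a b : V} {M M' : ℝ} (hM : supRatio C a b = M)
    (hM' : supRatio C b a = M') : hilbertDist C a b = (log (M * M') : ℝ) := by
  simp [hilbertDist, hM, hM']

theorem tanhQuarter_mono {x y : EReal} (hx : x ≠ ⊥) (h : x ≤ y) :
    tanhQuarter x ≤ tanhQuarter y := by
  by_cases hy : y = ⊤
  · unfold tanhQuarter
    rw [if_pos hy]
    split_ifs
    exacts [le_rfl, (tanh_lt_one _).le]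
  · have hx' : x ≠ ⊤ := ne_top_of_le_ne_top hy h
    rw [tanhQuarter, if_neg hx', tanhQuarter, if_neg hy]
    exact tanh_monotone (by gcongr; exact EReal.toReal_le_toReal h hx hy)

theorem baseNorm_sub_le_two_mul_tanhQuarter (hC : IsProperCone C) (he : e ∈ dualConeSet C)
    {a b : V} (ha : a ∈ coneBase C e) (hb : b ∈ coneBase C e) :
    baseNorm C e (a - b) ≤ 2 * tanhQuarter (hilbertDist C a b) := by
  obtain ⟨haC, ha1 : ⟪e, a⟫ = 1⟩ := ha
  obtain ⟨hbC, hb1 : ⟪e, b⟫ = 1⟩ := hb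
  by_cases hinf : hilbertDist C a b = ⊤
  · rw [tanhQuarter, if_pos hinf]
    have := baseNorm_le he haC hbC rfl
    rw [ha1, hb1] at this
    linarith
  obtain ⟨M, hM, hMmem⟩ := exists_supRatio_eq_coe hC.1 he ha1 hb1
    fun h => hinf (by simp [hilbertDist, h])
  obtain ⟨M', hM', hM'mem⟩ := exists_supRatio_eq_coe hC.1 he hb1 ha1
    fun h => hinf (by simp [hilbertDist, h])
  have h1M := one_le_of_smul_sub_mem he ha1 hb1 hMmem
  have h1M' := one_le_of_smul_sub_mem he hb1 ha1 hM'mem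
  have h1MM' : 1 ≤ M * M' := one_le_mul_of_one_le_of_one_le h1M h1M'
  rw [tanhQuarter, if_neg hinf, hilbertDist_eq_log hM hM', EReal.toReal_coe]
  set α := (M - 1) / (M * M' - 1)
  set β := (M' - 1) / (M * M' - 1)
  -- `α`, `β` solve `α M' + β = α + β M = 1`; if `M M' = 1` they are junk zeros, but then `a = b`.
  have hdecomp : a - b = α • (M' • a - b) - β • (M • b - a) := by
    rcases h1MM'.eq_or_lt with h | h
    · obtain ⟨rfl, rfl⟩ : M = 1 ∧ M' = 1 := ⟨by nlinarith, by nlinarith⟩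
      have hab : a - b = 0 := hC.eq_zero_of_neg_mem (by simpa using hM'mem) (by simpa using hMmem)
      simp [sub_eq_zero.1 hab]
    · have hαβ : α * M' + β = 1 ∧ α + β * M = 1 := by
        constructor <;> (simp only [α, β]; field_simp; ring)
      calc a - b = (α * M' + β) • a - (α + β * M) • b := by rw [hαβ.1, hαβ.2, one_smul, one_smul]
        _ = _ := by module
  calc baseNorm C e (a - b) ≤ ⟪e, α • (M' • a - b)⟫ + ⟪e, β • (M • b - a)⟫ :=
        baseNorm_le he (hC.smul_mem (div_nonneg (by linarith) (by linarith)) hM'mem)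
          (hC.smul_mem (div_nonneg (by linarith) (by linarith)) hMmem) hdecomp
    _ = 2 * ((M - 1) * (M' - 1) / (M * M' - 1)) := by
        simp only [real_inner_smul_right, inner_sub_right, ha1, hb1, α, β]
        ring
    _ ≤ 2 * tanh (log (M * M') / 4) := by
        gcongr
        exact sub_one_mul_sub_one_div_le_tanh h1M h1M'

variable {C' : Set V'} {e' : V'}

theorem hilbertDist_le_projDiam (T : V →ₗ[ℝ] V') {a b : V} (ha : a ∈ C \ {0})
    (hb : b ∈ C \ {0}) : hilbertDist C' (T a) (T b) ≤ projDiam C C' T :=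
  le_iSup₂_of_le a ha (le_iSup₂_of_le b hb le_rfl)

theorem baseNorm_map_sub_le (hC : IsProperCone C) (hC' : IsProperCone C')
    (he : e ∈ interior (dualConeSet C)) (he' : e' ∈ dualConeSet C') {T : V →ₗ[ℝ] V'}
    (hT : MapsTo T (coneBase C e) (coneBase C' e')) {c₁ c₂ : V} (hc₁ : c₁ ∈ C) (hc₂ : c₂ ∈ C)
    (h : ⟪e, c₁⟫ = ⟪e, c₂⟫) :
    baseNorm C' e' (T c₁ - T c₂) ≤ (⟪e, c₁⟫ + ⟪e, c₂⟫) * tanhQuarter (projDiam C C' T) := by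
  rcases (interior_subset he c₁ hc₁).eq_or_lt with h0 | hpos
  · have hzero : ∀ c ∈ C, ⟪e, c⟫ = 0 → c = 0 := fun c hc hc0 => by
      by_contra hne
      exact (inner_pos_of_mem_interior_dualConeSet he hc hne).ne' hc0
    rw [hzero c₁ hc₁ h0.symm, hzero c₂ hc₂ (h ▸ h0.symm)]
    simpa using baseNorm_le he' hC'.zero_mem hC'.zero_mem (sub_zero (0 : V')).symm
  set lam := ⟪e, c₁⟫
  have hb₁ : lam⁻¹ • c₁ ∈ coneBase C e := inv_inner_smul_mem_coneBase hC hc₁ hpos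
  have hb₂ : lam⁻¹ • c₂ ∈ coneBase C e := h ▸ inv_inner_smul_mem_coneBase hC hc₂ (h ▸ hpos)
  have hscale : T c₁ - T c₂ = lam • (T (lam⁻¹ • c₁) - T (lam⁻¹ • c₂)) := by
    simp only [map_smul, smul_sub, smul_smul, mul_inv_cancel₀ hpos.ne', one_smul]
  have hdist := hilbertDist_le_projDiam (C' := C') T
    ⟨hb₁.1, ne_zero_of_mem_coneBase hb₁⟩ ⟨hb₂.1, ne_zero_of_mem_coneBase hb₂⟩
  calc baseNorm C' e' (T c₁ - T c₂)
      ≤ lam * baseNorm C' e' (T (lam⁻¹ • c₁) - T (lam⁻¹ • c₂)) :=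
        hscale ▸ baseNorm_smul_le hC' he' hpos.le _
    _ ≤ lam * (2 * tanhQuarter (hilbertDist C' (T (lam⁻¹ • c₁)) (T (lam⁻¹ • c₂)))) :=
        mul_le_mul_of_nonneg_left
          (baseNorm_sub_le_two_mul_tanhQuarter hC' he' (hT hb₁) (hT hb₂)) hpos.le
    _ ≤ lam * (2 * tanhQuarter (projDiam C C' T)) := by
        gcongr
        exact tanhQuarter_mono (hilbertDist_ne_bot _ _ _) hdist
    _ = (lam + ⟪e, c₂⟫) * tanhQuarter (projDiam C C' T) := by rw [← h]; ring

theorem baseNorm_distance_contraction_general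
    {V : Type*} [NormedAddCommGroup V] [InnerProductSpace ℝ V]
    {V' : Type*} [NormedAddCommGroup V'] [InnerProductSpace ℝ V']
    (C : Set V) (C' : Set V') (hC : IsProperCone C) (hC' : IsProperCone C')
    (e : V) (he : e ∈ interior (dualConeSet C))
    (e' : V') (he' : e' ∈ interior (dualConeSet C'))
    (B : Set V) (hB : B = C ∩ {v : V | (inner ℝ e v : ℝ) = 1})
    (B' : Set V') (hB' : B' = C' ∩ {v : V' | (inner ℝ e' v : ℝ) = 1})
    (T : V →ₗ[ℝ] V') (hT : ∀ b ∈ B, T b ∈ B')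
    (v₁ v₂ : V) (hv : (inner ℝ e v₁ : ℝ) = (inner ℝ e v₂ : ℝ)) :
    baseNorm C' e' (T v₁ - T v₂) ≤ baseNorm C e (v₁ - v₂) * tanhQuarter (projDiam C C' T) := by
  subst hB hB'
  rw [← map_sub]
  refine le_baseNorm_mul_of_forall hC (interior_subset he) fun cp hcp cm hcm hdecomp => ?_
  have hmass : ⟪e, cp⟫ = ⟪e, cm⟫ := by
    have := congrArg (inner ℝ e) hdecomp
    rw [inner_sub_right, inner_sub_right, hv, sub_self] at this
    exact sub_eq_zero.1 this.symm
  rw [hdecomp, map_sub]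
  exact baseNorm_map_sub_le hC hC' he (interior_subset he') hT hcp hcm hmass

/-- **Contraction of base norm distance.** -/
theorem baseNorm_distance_contraction
    {V : Type*} [NormedAddCommGroup V] [InnerProductSpace ℝ V] [FiniteDimensional ℝ V]
    {V' : Type*} [NormedAddCommGroup V'] [InnerProductSpace ℝ V'] [FiniteDimensional ℝ V']
    (C : Set V) (C' : Set V') (hC : IsProperCone C) (hC' : IsProperCone C')
    (e : V) (he : e ∈ interior (dualConeSet C))
    (e' : V') (he' : e' ∈ interior (dualConeSet C'))
    (B : Set V) (hB : B = C ∩ {v : V | (inner ℝ e v : ℝ) = 1})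
    (B' : Set V') (hB' : B' = C' ∩ {v : V' | (inner ℝ e' v : ℝ) = 1})
    (T : V →ₗ[ℝ] V') (hT : ∀ b ∈ B, T b ∈ B')
    (v₁ v₂ : V) (hv : (inner ℝ e v₁ : ℝ) = (inner ℝ e v₂ : ℝ)) :
    baseNorm C' e' (T v₁ - T v₂) ≤ baseNorm C e (v₁ - v₂) * tanhQuarter (projDiam C C' T) :=
  baseNorm_distance_contraction_general C C' hC hC' e he e' he' B hB B' hB' T hT v₁ v₂ hv

end
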